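/- (Christoffel–Darboux formula, Hankel case.) If G is block Hankel and α ∈ ℂ with Im α > 0, then with ρ_β(λ) := −2πi(λ − \bar{β}) one has, for all λ, ω ∈ ℂ: −2πi(λ − \bar{ω})·F(λ)ΓF(ω)* = ρ_α(λ)·\overline{ρ_α(ω)}·F(λ)ΓF(α)*·(ρ_α(α)·F(α)ΓF(α)*)^{-1}·F(α)ΓF(ω)* − ρ_{\bar{α}}(λ)·\overline{ρ_{\bar{α}}(ω)}·F(λ)ΓF(\bar{α})*·(ρ_α(α)·F(\bar{α})ΓF(\bar{α})*)^{-1}·F(\bar{α})ΓF(ω)*. (Here ρ_α(α) = 4π·Im α > 0, and F(α)ΓF(α)*, F(\bar{α})ΓF(\bar{α})* are positive definite, so the inverses exist.) -/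

import Mathlib

open Matrix Complex
open scoped ComplexConjugate ComplexOrder

noncomputable section

/-- Index type for `ℂ^m` with `m = (n+1)p`, viewed as `n+1` blocks of size `p`. -/
abbrev Idx (n p : ℕ) : Type := Fin (n + 1) × Fin p

/-- The `p × m` matrix polynomial `F(λ) = [I_p, λI_p, …, λ^n I_p]`. -/
def Fm (n p : ℕ) (lam : ℂ) : Matrix (Fin p) (Idx n p) ℂ :=
  Matrix.of fun i jk => lam ^ (jk.1 : ℕ) * (if jk.2 = i then 1 else 0)

/-- The `m × p` matrix `e_k` whose `k`-th block is `I_p` and other blocks are `0`. -/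
def Ek (n p : ℕ) (k : Fin (n + 1)) : Matrix (Idx n p) (Fin p) ℂ :=
  Matrix.of fun jl i => if jl.1 = k ∧ jl.2 = i then 1 else 0

/-- The nilpotent block shift matrix `A` with blocks `A_{ij} = I_p` iff `j = i+1`. -/
def Am (n p : ℕ) : Matrix (Idx n p) (Idx n p) ℂ :=
  Matrix.of fun ia jb => if (jb.1 : ℕ) = (ia.1 : ℕ) + 1 ∧ ia.2 = jb.2 then 1 else 0

/-- `G` is block Hankel: `g_{i+1,j} = g_{i,j+1}` for `0 ≤ i,j ≤ n−1`. -/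
def BlockHankel (n p : ℕ) (G : Matrix (Idx n p) (Idx n p) ℂ) : Prop :=
  ∀ (i j : Fin n) (a b : Fin p),
    G (i.succ, a) (j.castSucc, b) = G (i.castSucc, a) (j.succ, b)

/-- `ρ_β(λ) = −2πi(λ − conj β)`. -/
def rho (beta lam : ℂ) : ℂ := -2 * (Real.pi : ℂ) * Complex.I * (lam - conj beta)


/-!
The Hankel property is the displacement identity `G A - A* G = e₀ t* - t e₀*` with
`t = A* G e₀`; together with `F(λ) (I - λ A) = e₀*` it factors the kernel
`K(λ, ω) = F(λ) Γ F(ω)*` as `(λ - ω̄) K(λ, ω) = V(λ) J V(ω)*`, where `J` is the standard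
symplectic matrix and `V(λ) = [I - λ F(λ) Γ t, λ F(λ) Γ e₀]`. Since `V(α) J V(ᾱ)* = 0`, the
square matrix `W = [V(α); V(ᾱ)]` makes `W J W*` block diagonal and invertible, so
`J = J W* (W J W*)⁻¹ W J`; sandwiching this between `V(λ)` and `V(ω)*` gives the formula.
-/

namespace Matrix

theorem mul_mul_eq_add_of_mul_mul_eq_zero {R : Type*} [CommRing R]
    {ι₁ ι₂ κ κ' : Type*} [Fintype ι₁] [Fintype ι₂] [DecidableEq ι₁] [DecidableEq ι₂]
    (J : Matrix (ι₁ ⊕ ι₂) (ι₁ ⊕ ι₂) R) {Va : Matrix ι₁ (ι₁ ⊕ ι₂) R} {Vb : Matrix ι₂ (ι₁ ⊕ ι₂) R}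
    {Ua : Matrix (ι₁ ⊕ ι₂) ι₁ R} {Ub : Matrix (ι₁ ⊕ ι₂) ι₂ R}
    (hab : Va * J * Ub = 0) (hba : Vb * J * Ua = 0)
    (ha : IsUnit (Va * J * Ua).det) (hb : IsUnit (Vb * J * Ub).det)
    (X : Matrix κ (ι₁ ⊕ ι₂) R) (Y : Matrix (ι₁ ⊕ ι₂) κ' R) :
    X * J * Y = X * J * Ua * (Va * J * Ua)⁻¹ * (Va * J * Y) +
      X * J * Ub * (Vb * J * Ub)⁻¹ * (Vb * J * Y) := by
  set W := fromRows Va Vb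
  set U := fromCols Ua Ub
  have hM : W * J * U = fromBlocks (Va * J * Ua) 0 0 (Vb * J * Ub) := by
    rw [fromRows_mul, fromRows_mul_fromCols, hab, hba]
  have hMu : IsUnit (W * J * U).det := by rw [hM, det_fromBlocks_zero₂₁]; exact ha.mul hb
  have hW : IsUnit W.det := by
    rw [det_mul, det_mul] at hMu
    exact isUnit_of_mul_isUnit_left (isUnit_of_mul_isUnit_left hMu)
  have hJU : W⁻¹ * (W * J * U) = J * U := by
    rw [Matrix.mul_assoc W J U, nonsing_inv_mul_cancel_left _ _ hW]
  have hJ : J * U * (W * J * U)⁻¹ * W * J = J := by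
    rw [← hJU, mul_nonsing_inv_cancel_right _ _ hMu, nonsing_inv_mul _ hW, Matrix.one_mul]
  have hMinv : (W * J * U)⁻¹ = fromBlocks (Va * J * Ua)⁻¹ 0 0 (Vb * J * Ub)⁻¹ := by
    rw [hM, inv_fromBlocks_zero₂₁_of_isUnit_iff _ _ _ (by simp [isUnit_iff_isUnit_det, ha, hb])]
    simp
  calc X * J * Y = X * (J * U * (W * J * U)⁻¹ * W * J) * Y := by rw [hJ]
    _ = X * J * U * (W * J * U)⁻¹ * (W * J * Y) := by simp only [Matrix.mul_assoc]
    _ = _ := by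
      rw [hMinv, mul_fromCols, fromRows_mul, fromRows_mul, fromCols_mul_fromBlocks,
        fromCols_mul_fromRows]
      simp only [Matrix.mul_zero, add_zero, zero_add]

theorem fromCols_mul_J_mul_conjTranspose_fromCols {R : Type*} [CommRing R] [StarRing R]
    {ι m : Type*} [Fintype ι] [Fintype m] [DecidableEq ι] [DecidableEq m]
    {G Γ A : Matrix m m R} {E t : Matrix m ι R}
    (hΓG : Γ * G = 1) (hGΓ : G * Γ = 1) (hΓ : Γᴴ = Γ)
    (hdisp : G * A - Aᴴ * G = E * tᴴ - t * Eᴴ)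
    {F₁ F₂ : Matrix ι m R} {z₁ z₂ : R}
    (h₁ : F₁ - z₁ • (F₁ * A) = Eᴴ) (h₂ : F₂ - z₂ • (F₂ * A) = Eᴴ) :
    fromCols (1 - z₁ • (F₁ * Γ * t)) (z₁ • (F₁ * Γ * E)) * J ι R *
        (fromCols (1 - z₂ • (F₂ * Γ * t)) (z₂ • (F₂ * Γ * E)))ᴴ =
      (z₁ - star z₂) • (F₁ * Γ * F₂ᴴ) := by
  -- The displacement identity turns the cross terms `E tᴴ - t Eᴴ` into `G A - Aᴴ G`, which the
  -- shift relations `F (1 - z A) = Eᴴ` absorb.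
  have hΓG' : ∀ X : Matrix m ι R, Γ * (G * X) = X := fun X => by
    rw [← Matrix.mul_assoc, hΓG, Matrix.one_mul]
  have hGΓ' : ∀ X : Matrix m ι R, G * (Γ * X) = X := fun X => by
    rw [← Matrix.mul_assoc, hGΓ, Matrix.one_mul]
  have hD := congrArg (F₁ * Γ * · * Γ * F₂ᴴ) hdisp
  have hB := congrArg (· * Γ * F₂ᴴ) h₁
  have hA := congrArg (F₁ * Γ * ·) (congrArg conjTranspose h₂)
  rw [conjTranspose_fromCols_eq_fromRows_conjTranspose, J, fromCols_mul_fromBlocks,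
    fromCols_mul_fromRows]
  simp only [conjTranspose_sub, conjTranspose_smul, conjTranspose_mul, conjTranspose_one,
    conjTranspose_conjTranspose, hΓ, Matrix.mul_zero, zero_add, add_zero, Matrix.mul_one,
    Matrix.one_mul, Matrix.mul_neg, Matrix.neg_mul, Matrix.mul_sub, Matrix.sub_mul,
    Matrix.mul_smul, Matrix.smul_mul, Matrix.mul_assoc, sub_smul, hΓG', hGΓ'] at hD hB hA ⊢
  linear_combination (norm := module) (z₁ * star z₂) • hD + star z₂ • hB - z₁ • hA

theorem inv_smul_of_ne_zero {K ι : Type*} [Field K] [Fintype ι] [DecidableEq ι] {c : K}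
    (hc : c ≠ 0) (A : Matrix ι ι K) : (c • A)⁻¹ = c⁻¹ • A⁻¹ := by
  by_cases hA : IsUnit A.det
  · exact inv_smul' A (Units.mk0 c hc) hA
  · have hcA : ¬IsUnit (c • A).det := by
      rw [det_smul, IsUnit.mul_iff]
      exact fun h => hA h.2
    rw [nonsing_inv_apply_not_isUnit _ hA, nonsing_inv_apply_not_isUnit _ hcA, smul_zero]

end Matrix

theorem two_point_formula_of_factorization {ι : Type*} [Fintype ι] [DecidableEq ι]
    (J : Matrix (ι ⊕ ι) (ι ⊕ ι) ℂ) (V : ℂ → Matrix ι (ι ⊕ ι) ℂ) (K : ℂ → ℂ → Matrix ι ι ℂ)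
    (hVK : ∀ z w, V z * J * (V w)ᴴ = (z - conj w) • K z w) {α : ℂ} (hα : α - conj α ≠ 0)
    (hKα : IsUnit (K α α).det) (hKα' : IsUnit (K (conj α) (conj α)).det) (z w : ℂ) :
    (z - conj w) • K z w =
      ((z - conj α) * (α - conj α)⁻¹ * (α - conj w)) • (K z α * (K α α)⁻¹ * K α w) -
      ((z - α) * (α - conj α)⁻¹ * (conj α - conj w)) •
        (K z (conj α) * (K (conj α) (conj α))⁻¹ * K (conj α) w) := by
  have hα' : conj α - α ≠ 0 := by rwa [← neg_sub, neg_ne_zero]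
  have h := mul_mul_eq_add_of_mul_mul_eq_zero J (Va := V α) (Vb := V (conj α))
    (by rw [hVK, conj_conj, sub_self, zero_smul]) (by rw [hVK, sub_self, zero_smul])
    (by rw [hVK, det_smul]; exact (pow_ne_zero _ hα).isUnit.mul hKα)
    (by rw [hVK, conj_conj, det_smul]; exact (pow_ne_zero _ hα').isUnit.mul hKα') (V z) (V w)ᴴ
  simp only [hVK, conj_conj, inv_smul_of_ne_zero hα, inv_smul_of_ne_zero hα', Matrix.smul_mul,
    Matrix.mul_smul, smul_smul] at h
  rw [h, ← neg_sub α (conj α), inv_neg]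
  module

section Hankel

variable {n p : ℕ} {κ : Type*}

theorem mul_Ek_apply (M : Matrix κ (Idx n p) ℂ) (k : Fin (n + 1)) (x : κ) (b : Fin p) :
    (M * Ek n p k) x b = M x (k, b) := by
  rw [mul_apply, Finset.sum_eq_single (k, b)] <;> aesop (add simp Ek)

theorem Ek_mul_apply (k : Fin (n + 1)) (N : Matrix (Fin p) κ ℂ) (i : Fin (n + 1)) (a : Fin p)
    (y : κ) :
    (Ek n p k * N) (i, a) y = if i = k then N a y else 0 := by
  split_ifs with h <;> simp [mul_apply, Ek, h]

theorem mul_Am_apply_zero (M : Matrix κ (Idx n p) ℂ) (x : κ) (b : Fin p) :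
    (M * Am n p) x (0, b) = 0 := by
  simp [mul_apply, Am]

theorem mul_Am_apply_succ (M : Matrix κ (Idx n p) ℂ) (x : κ) (j : Fin n) (b : Fin p) :
    (M * Am n p) x (j.succ, b) = M x (j.castSucc, b) := by
  rw [mul_apply, Finset.sum_eq_single (j.castSucc, b)] <;> aesop (add simp [Am, Fin.ext_iff])

theorem conjTranspose_Am_mul_apply_zero (M : Matrix (Idx n p) κ ℂ) (a : Fin p) (y : κ) :
    ((Am n p)ᴴ * M) (0, a) y = 0 := by
  rw [← conjTranspose_conjTranspose M, ← conjTranspose_mul, conjTranspose_apply,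
    mul_Am_apply_zero, star_zero]

theorem conjTranspose_Am_mul_apply_succ (M : Matrix (Idx n p) κ ℂ) (i : Fin n) (a : Fin p)
    (y : κ) :
    ((Am n p)ᴴ * M) (i.succ, a) y = M (i.castSucc, a) y := by
  rw [← conjTranspose_conjTranspose M, ← conjTranspose_mul, conjTranspose_apply,
    mul_Am_apply_succ, conjTranspose_apply, star_star, conjTranspose_conjTranspose]

theorem Fm_mul_Ek_zero (z : ℂ) : Fm n p z * Ek n p 0 = 1 := by
  ext a b
  simp [mul_Ek_apply, Fm, one_apply, eq_comm]

theorem Fm_sub_smul_Fm_mul_Am (z : ℂ) : Fm n p z - z • (Fm n p z * Am n p) = (Ek n p 0)ᴴ := by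
  ext a ⟨j, b⟩
  cases j using Fin.cases with
  | zero => simp [mul_Am_apply_zero, Fm, Ek, eq_comm]
  | succ j => simp [mul_Am_apply_succ, Fm, Ek, pow_succ']

theorem BlockHankel.mul_Am_sub_conjTranspose_Am_mul {G : Matrix (Idx n p) (Idx n p) ℂ}
    (hG : G.IsHermitian) (hH : BlockHankel n p G) :
    G * Am n p - (Am n p)ᴴ * G =
      Ek n p 0 * ((Am n p)ᴴ * G * Ek n p 0)ᴴ - (Am n p)ᴴ * G * Ek n p 0 * (Ek n p 0)ᴴ := by
  have hX : ∀ i a j b, (Ek n p 0 * ((Am n p)ᴴ * G * Ek n p 0)ᴴ) (i, a) (j, b) =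
      if i = 0 then star (((Am n p)ᴴ * G) (j, b) (0, a)) else 0 := fun i a j b => by
    rw [Ek_mul_apply, conjTranspose_apply, mul_Ek_apply]
  have hG' : ∀ x y, star (G x y) = G y x := fun x y => by rw [← conjTranspose_apply, hG.eq]
  rw [show (Am n p)ᴴ * G * Ek n p 0 * (Ek n p 0)ᴴ = (Ek n p 0 * ((Am n p)ᴴ * G * Ek n p 0)ᴴ)ᴴ by
    simp [Matrix.mul_assoc]]
  ext ⟨i, a⟩ ⟨j, b⟩
  rw [Matrix.sub_apply, Matrix.sub_apply, conjTranspose_apply, hX, hX]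
  cases i using Fin.cases with
  | zero =>
    cases j using Fin.cases with
    | zero => simp [mul_Am_apply_zero, conjTranspose_Am_mul_apply_zero]
    | succ j =>
      simp [mul_Am_apply_succ, conjTranspose_Am_mul_apply_zero, conjTranspose_Am_mul_apply_succ, hG']
  | succ i =>
    cases j using Fin.cases with
    | zero => simp [mul_Am_apply_zero, conjTranspose_Am_mul_apply_succ]
    | succ j => simp [mul_Am_apply_succ, conjTranspose_Am_mul_apply_succ, hH i j a b]

def hankelFactor (G : Matrix (Idx n p) (Idx n p) ℂ) (z : ℂ) : Matrix (Fin p) (Fin p ⊕ Fin p) ℂ :=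
  fromCols (1 - z • (Fm n p z * G⁻¹ * ((Am n p)ᴴ * G * Ek n p 0)))
    (z • (Fm n p z * G⁻¹ * Ek n p 0))

theorem hankelFactor_mul_J_mul_conjTranspose {G : Matrix (Idx n p) (Idx n p) ℂ} (hG : G.PosDef)
    (hH : BlockHankel n p G) (z w : ℂ) :
    hankelFactor G z * J (Fin p) ℂ * (hankelFactor G w)ᴴ =
      (z - conj w) • (Fm n p z * G⁻¹ * (Fm n p w)ᴴ) := by
  have hdet : IsUnit G.det := hG.det_pos.ne'.isUnit
  exact fromCols_mul_J_mul_conjTranspose_fromCols (nonsing_inv_mul G hdet)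
    (mul_nonsing_inv G hdet) hG.inv.isHermitian.eq
    (hH.mul_Am_sub_conjTranspose_Am_mul hG.isHermitian) (Fm_sub_smul_Fm_mul_Am z)
    (Fm_sub_smul_Fm_mul_Am w)

theorem posDef_Fm_mul_mul_conjTranspose {Γ : Matrix (Idx n p) (Idx n p) ℂ} (hΓ : Γ.PosDef)
    (z : ℂ) :
    (Fm n p z * Γ * (Fm n p z)ᴴ).PosDef :=
  hΓ.mul_mul_conjTranspose_same fun x y h => by
    simpa [vecMul_vecMul, Fm_mul_Ek_zero] using congrArg (· ᵥ* Ek n p 0) h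

end Hankel

theorem stmt13_general (p n : ℕ)
    (G : Matrix (Idx n p) (Idx n p) ℂ) (hG : G.PosDef) (hH : BlockHankel n p G)
    (α : ℂ) (hα : 0 < α.im) :
    ∀ lam om : ℂ,
      (-2 * (Real.pi : ℂ) * Complex.I * (lam - conj om)) • (Fm n p lam * G⁻¹ * (Fm n p om)ᴴ) =
        (rho α lam * conj (rho α om)) •
            (Fm n p lam * G⁻¹ * (Fm n p α)ᴴ * (rho α α • (Fm n p α * G⁻¹ * (Fm n p α)ᴴ))⁻¹ *
              (Fm n p α * G⁻¹ * (Fm n p om)ᴴ)) -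
          (rho (conj α) lam * conj (rho (conj α) om)) •
            (Fm n p lam * G⁻¹ * (Fm n p (conj α))ᴴ *
              (rho α α • (Fm n p (conj α) * G⁻¹ * (Fm n p (conj α))ᴴ))⁻¹ *
              (Fm n p (conj α) * G⁻¹ * (Fm n p om)ᴴ)) := by
  intro lam om
  have hα' : α - conj α ≠ 0 := by simp [sub_conj, hα.ne']
  have hK : ∀ z, IsUnit (Fm n p z * G⁻¹ * (Fm n p z)ᴴ).det := fun z =>
    (posDef_Fm_mul_mul_conjTranspose hG.inv z).det_pos.ne'.isUnit
  have hc : -2 * (Real.pi : ℂ) * I ≠ 0 := by simp [Real.pi_ne_zero, I_ne_zero]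
  have h := two_point_formula_of_factorization _ _ _ (hankelFactor_mul_J_mul_conjTranspose hG hH)
    hα' (hK α) (hK (conj α)) lam om
  rw [show rho α α = -2 * (Real.pi : ℂ) * I * (α - conj α) from rfl,
    inv_smul_of_ne_zero (mul_ne_zero hc hα'), inv_smul_of_ne_zero (mul_ne_zero hc hα'),
    mul_smul, h]
  simp only [rho, Matrix.mul_smul, Matrix.smul_mul, smul_smul, smul_sub, map_mul, map_sub, map_neg,
    conj_conj, conj_I, conj_ofReal, map_ofNat]
  match_scalars <;> field_simp <;> ring

theorem stmt13 (p n : ℕ) (hp : 0 < p) (hn : 0 < n)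
    (G : Matrix (Idx n p) (Idx n p) ℂ) (hG : G.PosDef) (hH : BlockHankel n p G)
    (α : ℂ) (hα : 0 < α.im) :
    ∀ lam om : ℂ,
      (-2 * (Real.pi : ℂ) * Complex.I * (lam - conj om)) • (Fm n p lam * G⁻¹ * (Fm n p om)ᴴ) =
        (rho α lam * conj (rho α om)) •
            (Fm n p lam * G⁻¹ * (Fm n p α)ᴴ * (rho α α • (Fm n p α * G⁻¹ * (Fm n p α)ᴴ))⁻¹ *
              (Fm n p α * G⁻¹ * (Fm n p om)ᴴ)) -
          (rho (conj α) lam * conj (rho (conj α) om)) •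
            (Fm n p lam * G⁻¹ * (Fm n p (conj α))ᴴ *
              (rho α α • (Fm n p (conj α) * G⁻¹ * (Fm n p (conj α))ᴴ))⁻¹ *
              (Fm n p (conj α) * G⁻¹ * (Fm n p om)ᴴ)) :=
  stmt13_general p n G hG hH α hα
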